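/- arXiv:1512.04174 — 7 statements merged into one kernel-verified Lean document; each statement's English description precedes it below -/
import Mathlib

section
/- Let A(x) = (a_{ij}(x)) be an m×n matrix whose entries are real homogeneous polynomials of degree 2p in x ∈ ℝ^d. If the rank of A(x) is at most 1 for every x ∈ ℝ^d, then there exist homogeneous polynomials b_1,…,b_m and c_1,…,c_n such that a_{ij}(x) = b_i(x)·c_j(x) for all i, j. -/
/-!
Pointwise rank at most one makes every 2×2 minor vanish at every real point, hence vanish as a
polynomial. In a GCD domain such a matrix factors as `b i * c j`: take for `c` the primitive part
of a nonzero row `A i₀`; the vanishing minors give `c j₀ * A i j = A i j₀ * c j`, and since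
the `c j` are coprime, `c j₀` divides `A i j₀`. Finally a factor of a nonzero homogeneous
polynomial is homogeneous, because both the total degree and the lowest degree of monomials are
additive on products over a domain.
-/

open MvPolynomial

namespace Matrix

theorem mul_eq_mul_of_rank_le_one {R m n : Type*} [CommRing R] [IsDomain R] [Fintype n]
    (M : Matrix m n R) (h : M.rank ≤ 1) (i k : m) (j l : n) :
    M i j * M k l = M i l * M k j := by
  by_contra hne
  have hdet : (M.submatrix ![i, k] ![j, l]).det ≠ 0 := by
    rw [det_fin_two]
    simpa [sub_eq_zero] using hne
  have h2 := rank_of_det_ne_zero hdet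
  have hle := M.rank_submatrix_le ![i, k] ![j, l]
  simp only [Fintype.card_fin] at h2
  omega

end Matrix

theorem exists_eq_mul_of_minors_eq {R ι κ : Type*} [CommRing R] [IsDomain R]
    [NormalizedGCDMonoid R] [Fintype κ] (A : ι → κ → R)
    (hA : ∀ i k j l, A i j * A k l = A i l * A k j) :
    ∃ (b : ι → R) (c : κ → R), ∀ i j, A i j = b i * c j := by
  by_cases! h0 : ∀ i j, A i j = 0
  · exact ⟨0, 0, by simpa using h0⟩
  obtain ⟨i₀, j₀, hA₀⟩ := h0
  obtain ⟨c, hc, hc1⟩ := Finset.univ.extract_gcd (A i₀) ⟨j₀, Finset.mem_univ _⟩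
  set g := Finset.univ.gcd (A i₀)
  have hc : ∀ j, A i₀ j = g * c j := fun j => hc j (Finset.mem_univ _)
  have hg : g ≠ 0 := fun h => hA₀ (by rw [hc, h, zero_mul])
  have hcj₀ : c j₀ ≠ 0 := fun h => hA₀ (by rw [hc, h, mul_zero])
  have hcross : ∀ i j, c j₀ * A i j = A i j₀ * c j := fun i j => by
    apply mul_left_cancel₀ hg
    have := hA i₀ i j₀ j
    rw [hc, hc] at this
    linear_combination this
  have hdvd : ∀ i, c j₀ ∣ A i j₀ := fun i => by
    have hgcd : c j₀ ∣ Finset.univ.gcd (fun j => A i j₀ * c j) :=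
      Finset.dvd_gcd fun j _ => ⟨A i j, (hcross i j).symm⟩
    simpa [hc1] using hgcd.trans (Finset.univ.gcd_mul_left' c (A i j₀)).dvd
  choose b hb using hdvd
  refine ⟨b, c, fun i j => mul_left_cancel₀ hcj₀ ?_⟩
  rw [hcross, hb]
  ring

namespace MvPolynomial

variable {σ R : Type*}

section CommSemiring

variable [CommSemiring R] {f : MvPolynomial σ R} {n : ℕ}

theorem order_coe_le_degree {d : σ →₀ ℕ} (hd : d ∈ f.support) :
    (f : MvPowerSeries σ R).order ≤ d.degree :=
  MvPowerSeries.order_le (by rwa [coeff_coe, ← mem_support_iff])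

theorem order_coe_le_totalDegree (hf : f ≠ 0) :
    (f : MvPowerSeries σ R).order ≤ f.totalDegree := by
  obtain ⟨d, hd⟩ := support_nonempty.mpr hf
  exact (order_coe_le_degree hd).trans (by exact_mod_cast le_totalDegree hd)

theorem isHomogeneous_totalDegree_of_totalDegree_le_order
    (h : (f.totalDegree : ℕ∞) ≤ (f : MvPowerSeries σ R).order) :
    f.IsHomogeneous f.totalDegree := fun d hd => by
  rw [← mem_support_iff] at hd
  rw [show (1 : σ → ℕ) = fun _ => 1 from rfl, ← Finsupp.degree_eq_weight_one (R := ℕ)]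
  exact le_antisymm (le_totalDegree hd) (by exact_mod_cast h.trans (order_coe_le_degree hd))

theorem IsHomogeneous.le_order_coe (hf : f.IsHomogeneous n) :
    (n : ℕ∞) ≤ (f : MvPowerSeries σ R).order :=
  MvPowerSeries.nat_le_order fun _ hd => by rw [coeff_coe]; exact hf.coeff_eq_zero hd.ne

end CommSemiring

theorem IsHomogeneous.exists_isHomogeneous_of_mul_left [CommRing R] [IsDomain R]
    {f g : MvPolynomial σ R} {n : ℕ} (h : (f * g).IsHomogeneous n) (hf : f ≠ 0) :
    ∃ k, g.IsHomogeneous k := by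
  by_cases hg : g = 0
  · exact ⟨0, hg ▸ isHomogeneous_zero _ _ 0⟩
  refine ⟨_, isHomogeneous_totalDegree_of_totalDegree_le_order ?_⟩
  have hdeg : f.totalDegree + g.totalDegree = n := by
    rw [← totalDegree_mul_of_isDomain hf hg, h.totalDegree (mul_ne_zero hf hg)]
  have hord := h.le_order_coe
  rw [coe_mul, MvPowerSeries.order_mul] at hord
  have hf' := order_coe_le_totalDegree hf
  have hg' := order_coe_le_totalDegree hg
  lift (f : MvPowerSeries σ R).order to ℕ using (hf'.trans_lt (ENat.natCast_lt_top _)).ne with a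
  lift (g : MvPowerSeries σ R).order to ℕ using (hg'.trans_lt (ENat.natCast_lt_top _)).ne with b
  norm_cast at *
  omega

theorem IsHomogeneous.exists_isHomogeneous_of_mul_right [CommRing R] [IsDomain R]
    {f g : MvPolynomial σ R} {n : ℕ} (h : (f * g).IsHomogeneous n) (hg : g ≠ 0) :
    ∃ k, f.IsHomogeneous k :=
  (mul_comm f g ▸ h).exists_isHomogeneous_of_mul_left hg

end MvPolynomial

theorem stmt_2_general (m n d p : ℕ)
    (A : Fin m → Fin n → MvPolynomial (Fin d) ℝ)
    (hhom : ∀ i j, (A i j).IsHomogeneous (2 * p))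
    (hrank : ∀ x : Fin d → ℝ, (Matrix.of fun i j => eval x (A i j)).rank ≤ 1) :
    ∃ (b : Fin m → MvPolynomial (Fin d) ℝ) (c : Fin n → MvPolynomial (Fin d) ℝ),
      (∀ i, ∃ k, (b i).IsHomogeneous k) ∧ (∀ j, ∃ k, (c j).IsHomogeneous k) ∧
      ∀ i j, A i j = b i * c j := by
  by_cases! hA : ∀ i j, A i j = 0
  · exact ⟨0, 0, fun _ => ⟨0, isHomogeneous_zero _ _ 0⟩, fun _ => ⟨0, isHomogeneous_zero _ _ 0⟩,
      by simpa using hA⟩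
  obtain ⟨i₀, j₀, hA₀⟩ := hA
  have hminor : ∀ i k j l, A i j * A k l = A i l * A k j := fun i k j l =>
    MvPolynomial.funext fun x => by
      simpa using (Matrix.of fun i j => eval x (A i j)).mul_eq_mul_of_rank_le_one (hrank x) i k j l
  let : NormalizedGCDMonoid (MvPolynomial (Fin d) ℝ) := Classical.arbitrary _
  obtain ⟨b, c, hbc⟩ := exists_eq_mul_of_minors_eq A hminor
  rw [hbc] at hA₀
  refine ⟨b, c, fun i => ?_, fun j => ?_, hbc⟩
  · exact (hbc i j₀ ▸ hhom i j₀).exists_isHomogeneous_of_mul_right (right_ne_zero_of_mul hA₀)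
  · exact (hbc i₀ j ▸ hhom i₀ j).exists_isHomogeneous_of_mul_left (left_ne_zero_of_mul hA₀)

theorem stmt_2 (m n d p : ℕ) (hm : 0 < m) (hn : 0 < n) (hd : 0 < d) (hp : 0 < p)
    (A : Fin m → Fin n → MvPolynomial (Fin d) ℝ)
    (hhom : ∀ i j, (A i j).IsHomogeneous (2 * p))
    (hrank : ∀ x : Fin d → ℝ, (Matrix.of fun i j => eval x (A i j)).rank ≤ 1) :
    ∃ (b : Fin m → MvPolynomial (Fin d) ℝ) (c : Fin n → MvPolynomial (Fin d) ℝ),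
      (∀ i, ∃ k, (b i).IsHomogeneous k) ∧ (∀ j, ∃ k, (c j).IsHomogeneous k) ∧
      ∀ i j, A i j = b i * c j :=
  stmt_2_general m n d p A hhom hrank
end

section
/- Let P(x) be a real quadratic form in three variables and let Q(x) be a nonnegative homogeneous polynomial of degree four in three variables. Suppose there exists δ > 0 such that for every t ∈ [0, δ] there is a quadratic form R_t with P(x)² − t·Q(x) = R_t(x)² for all x ∈ ℝ³. Then Q(x) = α²·P(x)² for some real α. -/
/-!
If `P ^ 2 - t Q = R ^ 2`, then `w = P - R` is a root of `Z ^ 2 - 2 P Z + t Q`, i.e. `w (2P - w) = t Q`,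
so `w` divides `Q`.
A nonzero polynomial has only finitely many divisors up to associates, and the units of a
polynomial ring over a field are the nonzero constants, so two parameters `t ≠ t'` give
proportional roots `w' = c w`. Comparing the two identities gives a linear relation between
`P` and `w`, which turns `t Q = w (2P - w)` into a constant multiple of `P ^ 2`.
Nonnegativity of `Q` makes that constant a square, and forces `Q = 0` when `P = 0`.
-/

open MvPolynomial

theorem UniqueFactorizationMonoid.finite_setOf_dvd_associates {M : Type*} [CommMonoidWithZero M]
    [UniqueFactorizationMonoid M] {y : M} (hy : y ≠ 0) :
    {a : Associates M | a ∣ Associates.mk y}.Finite :=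
  @Finite.of_fintype _ (fintypeSubtypeDvd (Associates.mk y) (by simpa using hy))

section Pencil

variable {A : Type*} [CommRing A] {P Q w t : A}

theorem linear_relation_of_pencil_roots_proportional [NoZeroDivisors A] {t' c : A} (hw : w ≠ 0)
    (h : w * (2 * P - w) = t * Q) (h' : w * c * (2 * P - w * c) = t' * Q) :
    2 * (t' - c * t) * P = (t' - c ^ 2 * t) * w := by
  refine mul_left_cancel₀ hw ?_
  linear_combination t' * h - t * h'

theorem mul_eq_mul_sq_of_pencil_root {a b : A} (h : w * (2 * P - w) = t * Q)
    (hab : a * P = b * w) : b ^ 2 * t * Q = a * (2 * b - a) * P ^ 2 := by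
  linear_combination (-b ^ 2) * h + (b * w + a * P - 2 * b * P) * hab

end Pencil

theorem MvPolynomial.exists_eq_C_mul_sq_of_pencil_roots_associated {σ K : Type*} [Field K]
    [NeZero (2 : K)] {P Q w w' : MvPolynomial σ K} {t t' : K} (hP : P ≠ 0) (ht : t ≠ 0)
    (ht' : t' ≠ 0) (hne : t ≠ t') (hw : w ≠ 0) (h : w * (2 * P - w) = C t * Q)
    (h' : w' * (2 * P - w') = C t' * Q) (hww' : Associated w w') :
    ∃ l : K, Q = C l * P ^ 2 := by
  obtain ⟨u, rfl⟩ := hww'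
  obtain ⟨c, -, hc⟩ := isUnit_iff_eq_C_of_isReduced.mp u.isUnit
  rw [hc] at h'
  have hrel := linear_relation_of_pencil_roots_proportional hw h h'
  set a := 2 * (t' - c * t)
  set b := t' - c ^ 2 * t
  have hab : C a * P = C b * w := by
    simp only [a, b, map_mul, map_sub, map_pow, map_ofNat]; exact hrel
  have hb : b ≠ 0 := by
    intro hb
    rw [hb, C_0, zero_mul, mul_eq_zero, C_eq_zero] at hab
    have e1 : t' - c * t = 0 := (mul_eq_zero.mp (hab.resolve_right hP)).resolve_left two_ne_zero
    have hc1 : (c - 1) * t' = 0 := by linear_combination c * e1 - hb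
    have : c = 1 := sub_eq_zero.mp ((mul_eq_zero.mp hc1).resolve_right ht')
    exact hne (by linear_combination -e1 - t * this)
  have key : C (b ^ 2 * t) * Q = C (a * (2 * b - a)) * P ^ 2 := by
    simp only [map_mul, map_sub, map_pow, map_ofNat]
    exact mul_eq_mul_sq_of_pencil_root h hab
  refine ⟨(b ^ 2 * t)⁻¹ * (a * (2 * b - a)), ?_⟩
  have hbt : b ^ 2 * t ≠ 0 := mul_ne_zero (pow_ne_zero 2 hb) ht
  rw [C_mul, mul_assoc, ← key, ← mul_assoc, ← C_mul, inv_mul_cancel₀ hbt, C_1, one_mul]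

theorem MvPolynomial.exists_eq_C_mul_sq_of_isSquare_sq_sub_C_mul {σ K : Type*} [Field K]
    [NeZero (2 : K)] {P Q : MvPolynomial σ K} (hP : P ≠ 0) {S : Set K} (hS : S.Infinite)
    (hsq : ∀ t ∈ S, IsSquare (P ^ 2 - C t * Q)) : ∃ l : K, Q = C l * P ^ 2 := by
  rcases eq_or_ne Q 0 with rfl | hQ
  · exact ⟨0, by simp⟩
  choose! R hR using hsq
  have hroot : ∀ t ∈ S, (P - R t) * (2 * P - (P - R t)) = C t * Q := fun t ht => by
    linear_combination hR t ht
  have hw : ∀ t ∈ S \ {0}, P - R t ≠ 0 := by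
    rintro t ⟨ht, ht0⟩ hwt
    have := hroot t ht
    rw [hwt, zero_mul, eq_comm, mul_eq_zero, C_eq_zero] at this
    exact this.elim ht0 hQ
  have hdvd : Set.MapsTo (fun t => Associates.mk (P - R t)) (S \ {0})
      {a | a ∣ Associates.mk Q} := by
    rintro t ⟨ht, ht0⟩
    exact Associates.mk_dvd_mk.mpr <|
      ((Ne.isUnit ht0).map C).dvd_mul_left.mp (Dvd.intro _ (hroot t ht))
  obtain ⟨t, ⟨ht, ht0⟩, t', ⟨ht', ht'0⟩, hne, hassoc⟩ :=
    (hS.sdiff (Set.finite_singleton 0)).exists_ne_map_eq_of_mapsTo hdvd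
      (UniqueFactorizationMonoid.finite_setOf_dvd_associates hQ)
  exact exists_eq_C_mul_sq_of_pencil_roots_associated hP ht0 ht'0 hne (hw t ⟨ht, ht0⟩)
    (hroot t ht) (hroot t' ht') (Associates.mk_eq_mk_iff_associated.mp hassoc)

theorem stmt_6_general (P Q : MvPolynomial (Fin 3) ℝ)
    (hQnn : ∀ x : Fin 3 → ℝ, 0 ≤ eval x Q)
    (δ : ℝ) (hδ : 0 < δ)
    (hsq : ∀ t ∈ Set.Icc (0 : ℝ) δ, ∃ R : MvPolynomial (Fin 3) ℝ, R.IsHomogeneous 2 ∧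
      ∀ x : Fin 3 → ℝ, (eval x P) ^ 2 - t * eval x Q = (eval x R) ^ 2) :
    ∃ α : ℝ, ∀ x : Fin 3 → ℝ, eval x Q = α ^ 2 * (eval x P) ^ 2 := by
  rcases eq_or_ne P 0 with rfl | hP
  · obtain ⟨R, -, hR⟩ := hsq δ ⟨hδ.le, le_rfl⟩
    refine ⟨0, fun x => ?_⟩
    have hRx := hR x
    simp only [map_zero] at hRx
    nlinarith [hQnn x, sq_nonneg (eval x R)]
  have hsq' : ∀ t ∈ Set.Icc 0 δ, IsSquare (P ^ 2 - C t * Q) := fun t ht => by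
    obtain ⟨R, -, hR⟩ := hsq t ht
    exact ⟨R, funext fun x => by simpa [sq] using hR x⟩
  obtain ⟨l, hl⟩ := exists_eq_C_mul_sq_of_isSquare_sq_sub_C_mul hP (Set.Icc_infinite hδ) hsq'
  obtain ⟨x₀, hx₀⟩ : ∃ x, eval x P ≠ 0 := by
    by_contra! h
    exact hP (funext fun x => by simpa using h x)
  have hl0 : 0 ≤ l := by
    have hQx₀ := hQnn x₀
    rw [hl, eval_mul, eval_C, eval_pow] at hQx₀
    exact nonneg_of_mul_nonneg_left hQx₀ (by positivity)
  exact ⟨√l, fun x => by rw [Real.sq_sqrt hl0, hl, eval_mul, eval_C, eval_pow]⟩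

theorem stmt_6 (P Q : MvPolynomial (Fin 3) ℝ)
    (hP : P.IsHomogeneous 2) (hQ : Q.IsHomogeneous 4)
    (hQnn : ∀ x : Fin 3 → ℝ, 0 ≤ eval x Q)
    (δ : ℝ) (hδ : 0 < δ)
    (hsq : ∀ t ∈ Set.Icc (0 : ℝ) δ, ∃ R : MvPolynomial (Fin 3) ℝ, R.IsHomogeneous 2 ∧
      ∀ x : Fin 3 → ℝ, (eval x P) ^ 2 - t * eval x Q = (eval x R) ^ 2) :
    ∃ α : ℝ, ∀ x : Fin 3 → ℝ, eval x Q = α ^ 2 * (eval x P) ^ 2 :=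
  stmt_6_general P Q hQnn δ hδ hsq
end

section
/- For n×n real symmetric positive semidefinite matrices A and B, (det(A + B))^{1/n} ≥ (det A)^{1/n} + (det B)^{1/n}. -/
/-!
If `A` and `B` are both singular the claim is trivial, so by symmetry let `A` be positive
definite. Writing `A = Sᴴ S` and `B = Sᴴ C S` with `C` positive semidefinite of eigenvalues
`μ i`, the inequality becomes `1 + (∏ μ i) ^ (1/n) ≤ (∏ (1 + μ i)) ^ (1/n)`, superadditivity of
the geometric mean. After dividing by `(∏ (1 + μ i)) ^ (1/n)` this is AM-GM applied to the ratios
`1 / (1 + μ i)` and `μ i / (1 + μ i)`, whose arithmetic means add up to `1`.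
-/

open Finset

namespace Real

variable {ι : Type*} [Fintype ι] [Nonempty ι]

theorem prod_rpow_one_div_card_le_sum_div_card {z : ι → ℝ} (hz : ∀ i, 0 ≤ z i) :
    (∏ i, z i) ^ ((1 : ℝ) / Fintype.card ι) ≤ (∑ i, z i) / Fintype.card ι := by
  simpa using geom_mean_le_arith_mean univ (fun _ ↦ 1) z (fun _ _ ↦ zero_le_one)
    (by simp [Fintype.card_pos]) (fun i _ ↦ hz i)

theorem prod_rpow_one_div_card_add_le {f g : ι → ℝ} (hf : ∀ i, 0 ≤ f i) (hg : ∀ i, 0 ≤ g i) :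
    (∏ i, f i) ^ ((1 : ℝ) / Fintype.card ι) + (∏ i, g i) ^ ((1 : ℝ) / Fintype.card ι) ≤
      (∏ i, (f i + g i)) ^ ((1 : ℝ) / Fintype.card ι) := by
  set p : ℝ := 1 / Fintype.card ι
  have hp : p ≠ 0 := by positivity
  by_cases hzero : ∃ i, f i + g i = 0
  · obtain ⟨i, hi⟩ := hzero
    have hfi : f i = 0 := by linarith [hf i, hg i]
    have hgi : g i = 0 := by linarith [hf i, hg i]
    rw [prod_eq_zero (mem_univ i) hfi, prod_eq_zero (mem_univ i) hgi, zero_rpow hp, add_zero]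
    exact rpow_nonneg (prod_nonneg fun i _ ↦ add_nonneg (hf i) (hg i)) p
  push Not at hzero
  have hfg : ∀ i, 0 < f i + g i := fun i ↦ (add_nonneg (hf i) (hg i)).lt_of_ne' (hzero i)
  have amgm_ratios : ∀ h : ι → ℝ, (∀ i, 0 ≤ h i) →
      (∏ i, h i) ^ p ≤
        (∏ i, (f i + g i)) ^ p * ((∑ i, h i / (f i + g i)) / Fintype.card ι) := by
    intro h hh
    have hratio : ∏ i, h i = (∏ i, (f i + g i)) * ∏ i, h i / (f i + g i) := by
      rw [← prod_mul_distrib]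
      exact prod_congr rfl fun i _ ↦ (mul_div_cancel₀ _ (hfg i).ne').symm
    rw [hratio, mul_rpow (prod_nonneg fun i _ ↦ (hfg i).le)
      (prod_nonneg fun i _ ↦ div_nonneg (hh i) (hfg i).le)]
    exact mul_le_mul_of_nonneg_left
      (prod_rpow_one_div_card_le_sum_div_card fun i ↦ div_nonneg (hh i) (hfg i).le)
      (rpow_nonneg (prod_nonneg fun i _ ↦ (hfg i).le) p)
  have hsum : (∑ i, f i / (f i + g i)) / Fintype.card ι +
      (∑ i, g i / (f i + g i)) / Fintype.card ι = 1 := by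
    rw [← add_div, ← sum_add_distrib]
    simp_rw [← add_div, div_self (hfg _).ne', sum_const, card_univ, nsmul_eq_mul, mul_one]
    exact div_self (by positivity)
  calc (∏ i, f i) ^ p + (∏ i, g i) ^ p
      ≤ (∏ i, (f i + g i)) ^ p * ((∑ i, f i / (f i + g i)) / Fintype.card ι)
        + (∏ i, (f i + g i)) ^ p * ((∑ i, g i / (f i + g i)) / Fintype.card ι) :=
        add_le_add (amgm_ratios f hf) (amgm_ratios g hg)
    _ = (∏ i, (f i + g i)) ^ p := by rw [← mul_add, hsum, mul_one]

end Real

namespace Matrix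

variable {𝕜 ι : Type*} [RCLike 𝕜] [Fintype ι] [DecidableEq ι]

theorem IsHermitian.det_one_add {C : Matrix ι ι 𝕜} (hC : C.IsHermitian) :
    (1 + C).det = ∏ i, (1 + hC.eigenvalues i : 𝕜) := by
  set U := hC.eigenvectorUnitary
  conv_lhs => rw [hC.spectral_theorem, ← map_one (Unitary.conjStarAlgAut 𝕜 _ U), ← map_add,
    Unitary.conjStarAlgAut_apply]
  rw [det_mul, det_mul, mul_right_comm, ← det_mul, Unitary.mul_star_self_of_mem U.2, det_one,
    one_mul, ← diagonal_one, diagonal_add, det_diagonal]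
  simp

open scoped MatrixOrder in
theorem PosDef.exists_det_eq_mul_prod {A B : Matrix ι ι ℝ} (hA : A.PosDef) (hB : B.PosSemidef) :
    ∃ μ : ι → ℝ, (∀ i, 0 ≤ μ i) ∧
      B.det = A.det * ∏ i, μ i ∧ (A + B).det = A.det * ∏ i, (1 + μ i) := by
  obtain ⟨S, rfl⟩ := CStarAlgebra.nonneg_iff_eq_star_mul_self.mp hA.posSemidef.nonneg
  have hS : IsUnit S.det := by
    rw [← isUnit_iff_isUnit_det]
    exact isUnit_of_mul_isUnit_right hA.isUnit
  obtain ⟨C, hC, rfl⟩ : ∃ C : Matrix ι ι ℝ, C.PosSemidef ∧ Sᴴ * C * S = B := by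
    refine ⟨(S⁻¹)ᴴ * B * S⁻¹, hB.conjTranspose_mul_mul_same S⁻¹, ?_⟩
    calc Sᴴ * ((S⁻¹)ᴴ * B * S⁻¹) * S = (S⁻¹ * S)ᴴ * B * (S⁻¹ * S) := by
          simp only [conjTranspose_mul, Matrix.mul_assoc]
      _ = B := by simp [nonsing_inv_mul S hS]
  refine ⟨hC.1.eigenvalues, hC.eigenvalues_nonneg, ?_, ?_⟩
  · rw [det_mul, det_mul, det_mul, hC.1.det_eq_prod_eigenvalues, star_eq_conjTranspose]
    simp only [RCLike.ofReal_real_eq_id, id]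
    ring
  · rw [star_eq_conjTranspose, show Sᴴ * S + Sᴴ * C * S = Sᴴ * (1 + C) * S by noncomm_ring,
      det_mul, det_mul, det_mul, hC.1.det_one_add]
    simp only [RCLike.ofReal_real_eq_id, id]
    ring

theorem PosDef.det_rpow_add_det_rpow_le [Nonempty ι] {A B : Matrix ι ι ℝ} (hA : A.PosDef)
    (hB : B.PosSemidef) :
    A.det ^ ((1 : ℝ) / Fintype.card ι) + B.det ^ ((1 : ℝ) / Fintype.card ι) ≤
      (A + B).det ^ ((1 : ℝ) / Fintype.card ι) := by
  obtain ⟨μ, hμ, hB_det, hAB_det⟩ := hA.exists_det_eq_mul_prod hB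
  have hA_det := hA.det_pos.le
  rw [hB_det, hAB_det, Real.mul_rpow hA_det (prod_nonneg fun i _ ↦ hμ i),
    Real.mul_rpow hA_det (prod_nonneg fun i _ ↦ add_nonneg zero_le_one (hμ i)), ← mul_one_add]
  gcongr
  simpa using Real.prod_rpow_one_div_card_add_le (fun _ ↦ zero_le_one) hμ

theorem PosSemidef.det_rpow_add_det_rpow_le [Nonempty ι] {A B : Matrix ι ι ℝ}
    (hA : A.PosSemidef) (hB : B.PosSemidef) :
    A.det ^ ((1 : ℝ) / Fintype.card ι) + B.det ^ ((1 : ℝ) / Fintype.card ι) ≤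
      (A + B).det ^ ((1 : ℝ) / Fintype.card ι) := by
  rcases hA.det_nonneg.eq_or_lt with hA_det | hA_det
  · rcases hB.det_nonneg.eq_or_lt with hB_det | hB_det
    · rw [← hA_det, ← hB_det, Real.zero_rpow (by positivity), add_zero]
      exact Real.rpow_nonneg (hA.add hB).det_nonneg _
    · rw [add_comm, add_comm A]
      exact (hB.posDef_iff_det_ne_zero.mpr hB_det.ne').det_rpow_add_det_rpow_le hA
  · exact (hA.posDef_iff_det_ne_zero.mpr hA_det.ne').det_rpow_add_det_rpow_le hB

end Matrix

theorem stmt_7 (n : ℕ) (hn : 0 < n) (A B : Matrix (Fin n) (Fin n) ℝ)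
    (hA : A.PosSemidef) (hB : B.PosSemidef) :
    A.det ^ ((1 : ℝ) / n) + B.det ^ ((1 : ℝ) / n) ≤ (A + B).det ^ ((1 : ℝ) / n) := by
  have : Nonempty (Fin n) := Fin.pos_iff_nonempty.mp hn
  simpa using hA.det_rpow_add_det_rpow_le hB
end

section
/- Let f and g be quadratic forms on ℝⁿ with g indefinite. If f(ξ) = 0 for every ξ ∈ ℝⁿ such that g(ξ) = 0, then there exists λ ∈ ℝ such that f = λ·g. -/
/-!
Restricted to a line `t ↦ x + t • y`, a quadratic form is a quadratic polynomial in `t`. If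
`g x` and `g y` have opposite signs, `t ↦ g (x + t • y)` has two distinct real roots. Any `h`
vanishing on the zero set of `g` with `h y = 0` is affine along that line and vanishes at both
roots, hence `h x = 0`. Taking `h = f - (f b / g b) • g` with `g b < 0` gives `h = 0` first on
`{g > 0}`, then, using a point of `{g > 0}`, on `{g < 0}`.
-/

theorem exists_ne_quadratic_roots_of_mul_neg {a b c : ℝ} (h : a * c < 0) :
    ∃ u v : ℝ, u ≠ v ∧ a * (u * u) + b * u + c = 0 ∧ a * (v * v) + b * v + c = 0 := by
  have ha : a ≠ 0 := by rintro rfl; simp at h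
  have hdisc : 0 < discrim a b c := by unfold discrim; nlinarith [sq_nonneg b]
  set s := √(discrim a b c)
  have hs : discrim a b c = s * s := (Real.mul_self_sqrt hdisc.le).symm
  have hs_pos : 0 < s := Real.sqrt_pos.mpr hdisc
  refine ⟨(-b + s) / (2 * a), (-b - s) / (2 * a), ?_,
    (quadratic_eq_zero_iff ha hs _).mpr (Or.inl rfl),
    (quadratic_eq_zero_iff ha hs _).mpr (Or.inr rfl)⟩
  rw [Ne, div_left_inj' (mul_ne_zero two_ne_zero ha)]
  linarith

namespace QuadraticMap

theorem map_add_smul {R M : Type*} [CommRing R] [AddCommGroup M] [Module R M]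
    (Q : QuadraticForm R M) (x y : M) (t : R) :
    Q (x + t • y) = Q y * (t * t) + polar Q x y * t + Q x := by
  rw [QuadraticMap.map_add (⇑Q), QuadraticMap.map_smul, polar_smul_right, smul_eq_mul, smul_eq_mul]
  ring

variable {V : Type*} [AddCommGroup V] [Module ℝ V] {f g : QuadraticForm ℝ V}

theorem apply_eq_zero_of_mul_neg (hfg : ∀ z, g z = 0 → f z = 0) {x y : V} (hfy : f y = 0)
    (hxy : g x * g y < 0) : f x = 0 := by
  obtain ⟨u, v, huv, hu, hv⟩ :=
    exists_ne_quadratic_roots_of_mul_neg (b := polar g x y) (by rwa [mul_comm])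
  have hfu := hfg (x + u • y) (by rwa [map_add_smul])
  have hfv := hfg (x + v • y) (by rwa [map_add_smul])
  rw [map_add_smul, hfy] at hfu hfv
  have hpolar : polar f x y = 0 := by
    have : (u - v) * polar f x y = 0 := by linear_combination hfu - hfv
    exact (mul_eq_zero.mp this).resolve_left (sub_ne_zero.mpr huv)
  linear_combination hfu - u * hpolar

theorem eq_zero_of_apply_eq_zero_of_neg (hfg : ∀ z, g z = 0 → f z = 0) {a b : V}
    (ha : 0 < g a) (hb : g b < 0) (hfb : f b = 0) : f = 0 := by
  have hf_pos : ∀ x, 0 < g x → f x = 0 := fun x hx ↦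
    apply_eq_zero_of_mul_neg hfg hfb (mul_neg_of_pos_of_neg hx hb)
  ext x
  rcases lt_trichotomy (g x) 0 with hx | hx | hx
  · exact apply_eq_zero_of_mul_neg hfg (hf_pos a ha) (mul_neg_of_neg_of_pos hx ha)
  · exact hfg x hx
  · exact hf_pos x hx

end QuadraticMap

theorem stmt_8 (n : ℕ) (f g : QuadraticForm ℝ (Fin n → ℝ))
    (hpos : ∃ a, 0 < g a) (hneg : ∃ b, g b < 0)
    (hvanish : ∀ ξ : Fin n → ℝ, g ξ = 0 → f ξ = 0) :
    ∃ lam : ℝ, f = lam • g := by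
  obtain ⟨a, ha⟩ := hpos
  obtain ⟨b, hb⟩ := hneg
  refine ⟨f b / g b, sub_eq_zero.mp (QuadraticMap.eq_zero_of_apply_eq_zero_of_neg ?_ ha hb ?_)⟩
  · intro z hz
    simp [hvanish z hz, hz]
  · simp [hb.ne]
end

section
/- If T is a d×d real symmetric positive semidefinite matrix, then its cofactor matrix cof(T) is also positive semidefinite. -/
/-!
For positive definite `A`, `adjugate A = det A • A⁻¹` is a positive multiple of a positive definite
matrix. A positive semidefinite `A` is the limit of the positive definite `A + ε • 1` as `ε → 0⁺`;
the adjugate is continuous and positive semidefinite matrices form a closed set.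
-/

open Matrix

/-- The cofactor matrix of a square matrix: the transpose of the adjugate. -/
def cofMatrix {n : Type*} [DecidableEq n] [Fintype n] {R : Type*} [CommRing R]
    (A : Matrix n n R) : Matrix n n R := (Matrix.adjugate A)ᵀ

open scoped ComplexOrder Topology

namespace Matrix

variable {n 𝕜 : Type*} [Fintype n] [RCLike 𝕜]

theorem isClosed_setOf_posSemidef : IsClosed {A : Matrix n n 𝕜 | A.PosSemidef} := by
  have : {A : Matrix n n 𝕜 | A.PosSemidef} =
      {A | Aᴴ = A} ∩ ⋂ x : n → 𝕜, {A | 0 ≤ star x ⬝ᵥ (A *ᵥ x)} := by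
    ext A
    simp only [Set.mem_ofPred_eq, Set.mem_inter_iff, Set.mem_iInter]
    exact ⟨fun h => ⟨h.1, h.dotProduct_mulVec_nonneg⟩,
      fun h => PosSemidef.of_dotProduct_mulVec_nonneg h.1 h.2⟩
  rw [this]
  refine (isClosed_eq (continuous_id.matrix_conjTranspose) continuous_id).inter
    (isClosed_iInter fun x => isClosed_le continuous_const ?_)
  fun_prop

variable [DecidableEq n]

theorem adjugate_eq_det_smul_inv {R : Type*} [CommRing R] (A : Matrix n n R) (h : IsUnit A.det) :
    adjugate A = A.det • A⁻¹ := by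
  rw [inv_def, smul_smul, Ring.mul_inverse_cancel _ h, one_smul]

theorem PosDef.adjugate {A : Matrix n n 𝕜} (hA : A.PosDef) : A.adjugate.PosDef := by
  rw [adjugate_eq_det_smul_inv A hA.det_pos.ne'.isUnit]
  exact hA.inv.smul hA.det_pos

theorem PosSemidef.adjugate {A : Matrix n n 𝕜} (hA : A.PosSemidef) : A.adjugate.PosSemidef := by
  have hlim : Filter.Tendsto (fun ε : ℝ => (A + ε • 1).adjugate) (𝓝[>] 0) (𝓝 A.adjugate) := by
    have : Continuous fun ε : ℝ => (A + ε • (1 : Matrix n n 𝕜)).adjugate := by fun_prop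
    simpa using this.continuousWithinAt.tendsto (x := 0) (s := Set.Ioi 0)
  refine isClosed_setOf_posSemidef.mem_of_tendsto hlim ?_
  filter_upwards [self_mem_nhdsWithin] with ε hε
  exact (PosDef.posSemidef_add hA (PosDef.one.smul hε)).adjugate.posSemidef

end Matrix

theorem cofMatrix_eq_adjugate_transpose {n R : Type*} [DecidableEq n] [Fintype n] [CommRing R]
    (A : Matrix n n R) : cofMatrix A = adjugate Aᵀ := by
  rw [cofMatrix, adjugate_transpose]

theorem stmt_12 (d : ℕ) (T : Matrix (Fin d) (Fin d) ℝ) (hT : T.PosSemidef) :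
    (cofMatrix T).PosSemidef := by
  rw [cofMatrix_eq_adjugate_transpose]
  exact hT.transpose.adjugate
end

section
/- Let T(y) be a 3×3 real symmetric matrix depending on y such that at some point y⁰ the entries satisfy t₁₁(y⁰)t₂₂(y⁰) − t₁₂(y⁰)² ≥ 0, and suppose t₁₁ is a quadratic form in y ∈ ℝ³ that is indefinite while t₂₂ is a quadratic form with t₁₁(y)t₂₂(y) − t₁₂(y)² ≥ 0 for all y. Then t₁₁(y) = 0 implies t₂₂(y) = 0 for every y ∈ ℝ³, and hence t₂₂ = λ²·t₁₁ for some λ ∈ ℝ. -/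
/-!
Write `P`, `Q` for the quadratic forms `t11`, `t22`; the minor condition gives `0 ≤ P x * Q x`.
If `P y = 0` and `P v > 0`, then `P (y + t v) + P (y - t v) = 2 t² P v > 0`, so points of
`{P > 0}`, where `Q ≥ 0`, accumulate at `y` and `Q y ≥ 0`; symmetrically `Q y ≤ 0`.

For Marcellini's theorem take `P x > 0 > P z`. Along `s ↦ s • x + z`, `P` is a quadratic in `s`
with two distinct real zeros, where `Q` vanishes as well. The combination `P x • Q - Q x • P` has no
`s²` term, so it is affine in `s` with two zeros, hence identically zero: `Q z / P z = Q x / P x`.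
The ratio `Q / P` is therefore constant, and nonnegative because `Q ≥ 0` on `{P > 0}`.
-/

open MvPolynomial

namespace MvPolynomial

variable {σ R : Type*} [CommRing R] {q : MvPolynomial σ R}

theorem IsHomogeneous.exists_linearMap_eval_eq (hq : q.IsHomogeneous 1) :
    ∃ f : (σ → R) →ₗ[R] R, ∀ x, f x = eval x q := by
  rw [← mem_homogeneousSubmodule, homogeneousSubmodule_one_eq_span_X] at hq
  induction hq using Submodule.span_induction with
  | mem p hp =>
    obtain ⟨i, rfl⟩ := hp
    exact ⟨LinearMap.proj i, fun x => by simp⟩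
  | zero => exact ⟨0, fun x => by simp⟩
  | add p r _ _ hp hr =>
    obtain ⟨f, hf⟩ := hp
    obtain ⟨g, hg⟩ := hr
    exact ⟨f + g, fun x => by simp [hf, hg]⟩
  | smul a p _ hp =>
    obtain ⟨f, hf⟩ := hp
    exact ⟨a • f, fun x => by simp [hf]⟩

theorem IsHomogeneous.exists_quadraticMap_eval_eq (hq : q.IsHomogeneous 2) :
    ∃ Q : QuadraticMap R (σ → R) R, ∀ x, Q x = eval x q := by
  rw [← mem_homogeneousSubmodule, ← homogeneousSubmodule_one_pow, pow_two] at hq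
  refine Submodule.mul_induction_on hq (fun p hp r hr => ?_) (fun p r hp hr => ?_)
  · obtain ⟨f, hf⟩ := IsHomogeneous.exists_linearMap_eval_eq hp
    obtain ⟨g, hg⟩ := IsHomogeneous.exists_linearMap_eval_eq hr
    exact ⟨QuadraticMap.linMulLin f g, fun x => by simp [hf, hg]⟩
  · obtain ⟨P, hP⟩ := hp
    obtain ⟨Q, hQ⟩ := hr
    exact ⟨P + Q, fun x => by simp [hP, hQ]⟩

end MvPolynomial

theorem exists_ne_quadratic_eq_zero {a b c : ℝ} (hac : a * c < 0) :
    ∃ s₁ s₂ : ℝ, s₁ ≠ s₂ ∧ a * (s₁ * s₁) + b * s₁ + c = 0 ∧ a * (s₂ * s₂) + b * s₂ + c = 0 := by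
  have ha : a ≠ 0 := by rintro rfl; simp at hac
  have hd : 0 < discrim a b c := by rw [discrim]; nlinarith [sq_nonneg b]
  have hs : discrim a b c = √(discrim a b c) * √(discrim a b c) := (Real.mul_self_sqrt hd.le).symm
  refine ⟨(-b + √(discrim a b c)) / (2 * a), (-b - √(discrim a b c)) / (2 * a), ?_,
    (quadratic_eq_zero_iff ha hs _).2 (Or.inl rfl), (quadratic_eq_zero_iff ha hs _).2 (Or.inr rfl)⟩
  intro h
  have := Real.sqrt_pos.2 hd
  linarith [(div_left_inj' (mul_ne_zero two_ne_zero ha)).1 h]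

namespace QuadraticMap

theorem map_smul_add {R M : Type*} [CommRing R] [AddCommGroup M] [Module R M]
    (Q : QuadraticMap R M R) (s : R) (x y : M) :
    Q (s • x + y) = s ^ 2 * Q x + s * polar Q x y + Q y := by
  rw [QuadraticMap.map_add Q, QuadraticMap.map_smul, polar_smul_left, smul_eq_mul, smul_eq_mul]
  ring

section

variable {V : Type*} [AddCommGroup V] [Module ℝ V] {P Q : QuadraticForm ℝ V}

theorem apply_nonneg_of_isotropic (hPQ : ∀ x, 0 ≤ P x * Q x) {v y : V} (hv : 0 < P v)
    (hy : P y = 0) : 0 ≤ Q y := by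
  have hQ : ∀ x, 0 < P x → 0 ≤ Q x := fun x hx => nonneg_of_mul_nonneg_right (hPQ x) hx
  have hline : ∀ t : ℝ, 0 < t → 0 ≤ t ^ 2 * Q v + t * |polar Q v y| + Q y := by
    intro t ht
    obtain ⟨s, hs, hPs⟩ : ∃ s, |s| = t ∧ 0 < P (s • v + y) := by
      have hsum : P (t • v + y) + P ((-t) • v + y) = 2 * t ^ 2 * P v := by
        rw [map_smul_add, map_smul_add, hy]; ring
      by_cases h : 0 < P (t • v + y)
      · exact ⟨t, abs_of_pos ht, h⟩
      · exact ⟨-t, by rw [abs_neg, abs_of_pos ht], by nlinarith [mul_pos (pow_pos ht 2) hv]⟩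
    have hQs := hQ _ hPs
    rw [map_smul_add, ← sq_abs, hs] at hQs
    have hlin : s * polar Q v y ≤ t * |polar Q v y| := by
      rw [← hs, ← abs_mul]
      exact le_abs_self _
    linarith
  have hlim : Filter.Tendsto (fun t : ℝ => t ^ 2 * Q v + t * |polar Q v y| + Q y)
      (nhdsWithin 0 (Set.Ioi 0)) (nhds (Q y)) := by
    have : Continuous fun t : ℝ => t ^ 2 * Q v + t * |polar Q v y| + Q y := by fun_prop
    simpa using (this.tendsto 0).mono_left nhdsWithin_le_nhds
  exact ge_of_tendsto hlim (eventually_nhdsWithin_of_forall hline)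

theorem apply_eq_zero_of_isotropic (hPQ : ∀ x, 0 ≤ P x * Q x) {v w y : V} (hv : 0 < P v)
    (hw : P w < 0) (hy : P y = 0) : Q y = 0 := by
  have hle : 0 ≤ (-Q) y :=
    apply_nonneg_of_isotropic (P := -P) (fun x => by simpa using hPQ x) (v := w)
      (by simpa using hw) (by simpa using hy)
  exact le_antisymm (by simpa using hle) (apply_nonneg_of_isotropic hPQ hv hy)

theorem mul_apply_eq_of_isotropic (h : ∀ y, P y = 0 → Q y = 0) {x z : V} (hx : 0 < P x)
    (hz : P z < 0) : P x * Q z = Q x * P z := by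
  obtain ⟨s₁, s₂, hne, h₁, h₂⟩ :=
    exists_ne_quadratic_eq_zero (b := polar P x z) (mul_neg_of_pos_of_neg hx hz)
  have hroot : ∀ s, P x * (s * s) + polar P x z * s + P z = 0 →
      s * (P x * polar Q x z - Q x * polar P x z) + (P x * Q z - Q x * P z) = 0 := by
    intro s hs
    have hQs := h (s • x + z) (by rw [map_smul_add]; linear_combination hs)
    rw [map_smul_add] at hQs
    linear_combination P x * hQs - Q x * hs
  have e₁ := hroot s₁ h₁
  have hslope : P x * polar Q x z - Q x * polar P x z = 0 := by
    have : (s₁ - s₂) * (P x * polar Q x z - Q x * polar P x z) = 0 := by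
      linear_combination e₁ - hroot s₂ h₂
    exact (mul_eq_zero.1 this).resolve_left (sub_ne_zero.2 hne)
  linear_combination e₁ - s₁ * hslope

theorem exists_eq_smul_of_isotropic {a b : V} (ha : 0 < P a) (hb : P b < 0)
    (h : ∀ y, P y = 0 → Q y = 0) : ∃ c : ℝ, Q = c • P := by
  refine ⟨Q a / P a, QuadraticMap.ext fun y => ?_⟩
  rw [smul_apply, smul_eq_mul, div_mul_eq_mul_div, eq_div_iff ha.ne']
  rcases lt_trichotomy (P y) 0 with hy | hy | hy
  · linear_combination mul_apply_eq_of_isotropic h ha hy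
  · rw [hy, h y hy, zero_mul, mul_zero]
  · apply mul_right_cancel₀ hb.ne
    linear_combination P y * mul_apply_eq_of_isotropic h ha hb -
      P a * mul_apply_eq_of_isotropic h hy hb

end

end QuadraticMap

theorem stmt_15_general (t11 t12 t22 : MvPolynomial (Fin 3) ℝ)
    (h11 : t11.IsHomogeneous 2) (h22 : t22.IsHomogeneous 2)
    (hpos : ∃ y : Fin 3 → ℝ, 0 < eval y t11) (hneg : ∃ y : Fin 3 → ℝ, eval y t11 < 0)
    (hminor : ∀ y : Fin 3 → ℝ, 0 ≤ eval y t11 * eval y t22 - (eval y t12) ^ 2) :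
    (∀ y : Fin 3 → ℝ, eval y t11 = 0 → eval y t22 = 0) ∧
    ∃ lam : ℝ, t22 = C (lam ^ 2) * t11 := by
  obtain ⟨P, hP⟩ := h11.exists_quadraticMap_eval_eq
  obtain ⟨Q, hQ⟩ := h22.exists_quadraticMap_eval_eq
  simp only [← hP, ← hQ] at hpos hneg hminor ⊢
  obtain ⟨a, ha⟩ := hpos
  obtain ⟨b, hb⟩ := hneg
  have hPQ : ∀ x, 0 ≤ P x * Q x := fun x => by nlinarith [hminor x, sq_nonneg (eval x t12)]
  have hzero : ∀ y, P y = 0 → Q y = 0 := fun y => QuadraticMap.apply_eq_zero_of_isotropic hPQ ha hb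
  refine ⟨hzero, ?_⟩
  obtain ⟨c, hc⟩ := QuadraticMap.exists_eq_smul_of_isotropic ha hb hzero
  have hc₀ : 0 ≤ c := by
    have := hPQ a
    rw [hc, smul_apply, smul_eq_mul] at this
    nlinarith [mul_pos ha ha]
  refine ⟨√c, MvPolynomial.funext fun x => ?_⟩
  rw [Real.sq_sqrt hc₀, eval_mul, eval_C, ← hP, ← hQ, hc, smul_apply, smul_eq_mul]

theorem stmt_15 (t11 t12 t22 : MvPolynomial (Fin 3) ℝ)
    (h11 : t11.IsHomogeneous 2) (h12 : t12.IsHomogeneous 2) (h22 : t22.IsHomogeneous 2)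
    (hpos : ∃ y : Fin 3 → ℝ, 0 < eval y t11) (hneg : ∃ y : Fin 3 → ℝ, eval y t11 < 0)
    (hy0 : ∃ y0 : Fin 3 → ℝ, 0 ≤ eval y0 t11 * eval y0 t22 - (eval y0 t12) ^ 2)
    (hminor : ∀ y : Fin 3 → ℝ, 0 ≤ eval y t11 * eval y t22 - (eval y t12) ^ 2) :
    (∀ y : Fin 3 → ℝ, eval y t11 = 0 → eval y t22 = 0) ∧
    ∃ lam : ℝ, t22 = C (lam ^ 2) * t11 :=
  stmt_15_general t11 t12 t22 h11 h22 hpos hneg hminor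
end

section
/- Let H(y) be a 3×3 symmetric matrix of quadratic forms in y ∈ ℝ³, positive semidefinite for each y, whose diagonal entries satisfy h_{ii}(y) = a_{ii}·s_i(y)² for linear forms s_i and constants a_{ii} ≥ 0. Then each off-diagonal entry satisfies h_{ij}(y) = a_{ij}·s_i(y)·s_j(y) for some constants a_{ij}. -/
/-! The 2×2 minors of `H(y)` give `h_ij(y)² ≤ a_i a_j (s_i(y) s_j(y))²`. Hence `h_ij` vanishes on
the plane `s_i = 0`, so `h_ij = s_i l` for a linear form `l`. Off that plane the bound becomes
`l² ≤ a_i a_j s_j²`, which extends to all `y` by continuity and density, so `s_j ∣ l` as well.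
Comparing degrees, `h_ij / (s_i s_j)` is a constant. -/

open MvPolynomial Matrix

lemma Matrix.PosSemidef.sq_apply_le {n : Type*} [Fintype n] {M : Matrix n n ℝ} (hM : M.PosSemidef)
    (i j : n) : M i j ^ 2 ≤ M i i * M j j := by
  have hdet := (hM.submatrix ![i, j]).det_nonneg
  have hsymm : M j i = M i j := hM.1.apply i j
  rw [det_fin_two] at hdet
  simp only [submatrix_apply, Matrix.cons_val_zero, Matrix.cons_val_one, hsymm] at hdet
  linarith [sq (M i j)]

namespace MvPolynomial

variable {σ R : Type*}

lemma IsHomogeneous.exists_eq_sum_smul_X [Fintype σ] [CommSemiring R] {s : MvPolynomial σ R}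
    (hs : s.IsHomogeneous 1) : ∃ c : σ → R, s = ∑ i, c i • X i := by
  have hmem : s ∈ homogeneousSubmodule σ R 1 := hs
  rw [homogeneousSubmodule_one_eq_span_X, Submodule.mem_span_range_iff_exists_fun] at hmem
  obtain ⟨c, hc⟩ := hmem
  exact ⟨c, hc.symm⟩

lemma eval_aeval [CommSemiring R] (f : σ → MvPolynomial σ R) (y : σ → R) (p : MvPolynomial σ R) :
    eval y (aeval f p) = eval (fun i ↦ eval y (f i)) p :=
  comp_aeval_apply f (aeval y) p

lemma dvd_sub_aeval [CommRing R] {d : MvPolynomial σ R} {f : σ → MvPolynomial σ R}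
    (h : ∀ i, d ∣ X i - f i) (p : MvPolynomial σ R) : d ∣ p - aeval f p := by
  have hquot : (Ideal.Quotient.mkₐ R (Ideal.span {d})).comp (aeval f) =
      Ideal.Quotient.mkₐ R (Ideal.span {d}) := by
    refine algHom_ext fun i ↦ ?_
    simpa [Ideal.Quotient.mkₐ_eq_mk, Ideal.Quotient.eq, Ideal.mem_span_singleton]
      using (h i).neg_right
  rw [← Ideal.mem_span_singleton, ← Ideal.Quotient.eq]
  simpa [Ideal.Quotient.mkₐ_eq_mk] using (congr($hquot p)).symm

lemma IsHomogeneous.dvd_of_forall_eval_eq_zero [Fintype σ] [Field R] [Infinite R]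
    {s p : MvPolynomial σ R} (hs : s.IsHomogeneous 1) (hs0 : s ≠ 0)
    (h : ∀ y, eval y s = 0 → eval y p = 0) : s ∣ p := by
  classical
  obtain ⟨c, hc⟩ := hs.exists_eq_sum_smul_X
  obtain ⟨m, hm⟩ : ∃ m, c m ≠ 0 := by
    by_contra! hc0
    simp [hc, hc0] at hs0
  -- The substitution `X m ↦ X m - s / c m` kills `s`, hence kills `p`, and moves `p` by a
  -- multiple of `s`.
  set f : σ → MvPolynomial σ R :=
    fun i ↦ X i - Pi.single (M := fun _ ↦ MvPolynomial σ R) m ((c m)⁻¹ • s) i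
  have hfs : MvPolynomial.aeval f s = 0 := by
    conv_lhs => rw [hc]
    simp only [map_sum, map_smul, aeval_X, f, smul_sub, Finset.sum_sub_distrib]
    rw [← hc, Fintype.sum_eq_single m fun i hi ↦ by simp [hi], Pi.single_eq_same, smul_smul,
      mul_inv_cancel₀ hm, one_smul, sub_self]
  have hfp : MvPolynomial.aeval f p = 0 := MvPolynomial.funext fun y ↦ by
    rw [eval_aeval, map_zero]
    exact h _ (by rw [← eval_aeval, hfs, map_zero])
  have hdvd : ∀ i, s ∣ X i - f i := fun i ↦ by
    rcases eq_or_ne i m with rfl | hi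
    · simp [f, smul_eq_C_mul]
    · simp [f, hi]
  simpa only [hfp, sub_zero] using dvd_sub_aeval hdvd p

lemma IsHomogeneous.dense_setOf_eval_ne_zero [Fintype σ] {s : MvPolynomial σ ℝ}
    (hs : s.IsHomogeneous 1) (hs0 : s ≠ 0) : Dense {y | eval y s ≠ 0} := by
  obtain ⟨c, hc⟩ := hs.exists_eq_sum_smul_X
  set ℓ : (σ → ℝ) →ₗ[ℝ] ℝ := ∑ i, c i • LinearMap.proj i
  have hℓ : ∀ y, eval y s = ℓ y := fun y ↦ by simp [hc, ℓ]
  have hker : LinearMap.ker ℓ ≠ ⊤ := fun htop ↦ hs0 <| MvPolynomial.funext fun y ↦ by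
    rw [hℓ, LinearMap.ker_eq_top.mp htop, map_zero, LinearMap.zero_apply]
  have hint : interior (LinearMap.ker ℓ : Set (σ → ℝ)) = ∅ := by
    by_contra hne
    exact hker (Submodule.eq_top_of_nonempty_interior' _ (Set.nonempty_iff_ne_empty.mpr hne))
  convert interior_eq_empty_iff_dense_compl.mp hint using 2
  ext y
  simp [hℓ]

lemma eq_C_coeff_zero_of_isHomogeneous_mul [CommRing R] [IsDomain R] {m q : MvPolynomial σ R}
    {n : ℕ} (hm : m.IsHomogeneous n) (hm0 : m ≠ 0) (hmq : (m * q).IsHomogeneous n) :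
    q = C (coeff 0 q) := by
  rcases eq_or_ne q 0 with rfl | hq0
  · simp
  have hdeg := totalDegree_mul_of_isDomain hm0 hq0
  rw [hmq.totalDegree (mul_ne_zero hm0 hq0), hm.totalDegree hm0] at hdeg
  exact totalDegree_eq_zero_iff_eq_C.mp (by omega)

lemma exists_eq_C_mul_mul_of_sq_eval_le [Fintype σ] {h s t : MvPolynomial σ ℝ}
    (hh : h.IsHomogeneous 2) (hs : s.IsHomogeneous 1) (ht : t.IsHomogeneous 1) (A : ℝ)
    (hle : ∀ y, eval y h ^ 2 ≤ A * (eval y s * eval y t) ^ 2) : ∃ b, h = C b * (s * t) := by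
  by_cases hst : s * t = 0
  · refine ⟨0, MvPolynomial.funext fun y ↦ ?_⟩
    have hy := hle y
    rw [← map_mul, hst, map_zero] at hy
    simpa using hy
  obtain ⟨hs0, ht0⟩ := mul_ne_zero_iff.mp hst
  obtain ⟨l, rfl⟩ : s ∣ h := hs.dvd_of_forall_eval_eq_zero hs0 fun y hy ↦ by
    simpa [hy] using hle y
  have hl : ∀ y, eval y l ^ 2 ≤ A * eval y t ^ 2 := by
    have hclosed : IsClosed {y | eval y l ^ 2 ≤ A * eval y t ^ 2} :=
      isClosed_le ((continuous_eval l).pow 2) (continuous_const.mul ((continuous_eval t).pow 2))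
    refine fun y ↦ hclosed.closure_subset_iff.mpr (fun y hy ↦ ?_)
      ((hs.dense_setOf_eval_ne_zero hs0).closure_eq ▸ Set.mem_univ y)
    replace hy : eval y s ≠ 0 := hy
    have hpos : 0 < eval y s ^ 2 := by positivity
    have hbound := hle y
    rw [map_mul] at hbound
    exact le_of_mul_le_mul_left (by linarith) hpos
  obtain ⟨q, rfl⟩ : t ∣ l := ht.dvd_of_forall_eval_eq_zero ht0 fun y hy ↦ by
    simpa [hy] using hl y
  rw [← mul_assoc] at hh ⊢
  exact ⟨coeff 0 q, by
    rw [mul_comm, ← eq_C_coeff_zero_of_isHomogeneous_mul (hs.mul ht) hst hh]⟩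

end MvPolynomial

theorem stmt_17_general (H : Matrix (Fin 3) (Fin 3) (MvPolynomial (Fin 3) ℝ))
    (hhom : ∀ i j, (H i j).IsHomogeneous 2)
    (hpsd : ∀ y : Fin 3 → ℝ, (H.map (eval y)).PosSemidef)
    (s : Fin 3 → MvPolynomial (Fin 3) ℝ) (hs : ∀ i, (s i).IsHomogeneous 1)
    (a : Fin 3 → ℝ)
    (hdiag : ∀ i, H i i = C (a i) * (s i) ^ 2) :
    ∃ b : Fin 3 → Fin 3 → ℝ, ∀ i j, i ≠ j → H i j = C (b i j) * (s i * s j) := by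
  have hfactor : ∀ i j, ∃ b, H i j = C b * (s i * s j) := fun i j ↦
    exists_eq_C_mul_mul_of_sq_eval_le (hhom i j) (hs i) (hs j) (a i * a j) fun y ↦ by
      have hminor := (hpsd y).sq_apply_le i j
      simp only [map_apply, hdiag, map_mul, map_pow, eval_C] at hminor
      linarith
  choose b hb using hfactor
  exact ⟨b, fun i j _ ↦ hb i j⟩

theorem stmt_17 (H : Matrix (Fin 3) (Fin 3) (MvPolynomial (Fin 3) ℝ))
    (hsym : H.IsSymm) (hhom : ∀ i j, (H i j).IsHomogeneous 2)
    (hpsd : ∀ y : Fin 3 → ℝ, (H.map (eval y)).PosSemidef)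
    (s : Fin 3 → MvPolynomial (Fin 3) ℝ) (hs : ∀ i, (s i).IsHomogeneous 1)
    (a : Fin 3 → ℝ) (ha : ∀ i, 0 ≤ a i)
    (hdiag : ∀ i, H i i = C (a i) * (s i) ^ 2) :
    ∃ b : Fin 3 → Fin 3 → ℝ, ∀ i j, i ≠ j → H i j = C (b i j) * (s i * s j) :=
  stmt_17_general H hhom hpsd s hs a hdiag
end
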